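/- arXiv:2009.05933 — 2 statements merged into one kernel-verified Lean document; each statement's English description precedes it below -/
import Mathlib

section
/- Suppose real numbers M(f) ≥ 0, H(f) ≥ 0, N(f) satisfy the Gagliardo-Nirenberg inequality -N(f) ≤ C_opt H(f)^{3/2} M(f)^{1/2} with C_opt = (2/3)(H(φ)M(φ))^{-1/2} for some fixed positive numbers H(φ), M(φ), and set N(φ)M(φ) = -(2/3) H(φ)M(φ). If -N(f) M(f) ≤ (1-η)·(-N(φ)M(φ)) for some η ∈ (0,1) and N(f) < 0, then -N(f) ≤ (2/3)(1-η)^{1/3} H(f); consequently G(f) := H(f) + (3/2)N(f) ≥ (1 - (1-η)^{1/3}) H(f). -/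
/-!
Squaring the Gagliardo–Nirenberg bound gives `(-N)² ≤ (2/3)² H³ M / (H_φ M_φ)`; multiplying by the
smallness condition `-N M ≤ (1-η) (2/3) H_φ M_φ` cancels the ground-state quantities and leaves
`(-N)³ M ≤ (1-η) ((2/3) H)³ M`. Dividing by `M` (which is positive, since otherwise the
Gagliardo–Nirenberg bound forces `N = 0`) and taking cube roots gives the estimate on `-N`,
and the lower bound on the virial functional `H + (3/2) N` is a linear consequence.
-/

open Real

lemma sq_le_of_le_mul_rpow {a c K H M : ℝ} (hK : 0 < K) (hH : 0 ≤ H) (hM : 0 ≤ M) (ha : 0 ≤ a)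
    (h : a ≤ c * K ^ (-(1 : ℝ) / 2) * H ^ ((3 : ℝ) / 2) * M ^ ((1 : ℝ) / 2)) :
    a ^ 2 ≤ c ^ 2 * H ^ 3 * M / K := by
  have hsq {x : ℝ} (hx : 0 ≤ x) (r : ℝ) : (x ^ r) ^ 2 = x ^ (r * 2) :=
    (rpow_mul_natCast hx r 2).symm
  calc a ^ 2 ≤ (c * K ^ (-(1 : ℝ) / 2) * H ^ ((3 : ℝ) / 2) * M ^ ((1 : ℝ) / 2)) ^ 2 :=
        pow_le_pow_left₀ ha h 2
    _ = c ^ 2 * H ^ 3 * M / K := by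
        rw [mul_pow, mul_pow, mul_pow, hsq hK.le, hsq hH, hsq hM]
        norm_num [rpow_neg_one, div_eq_mul_inv]
        ring

lemma le_rpow_one_third_mul_of_pow_three_le {a b t : ℝ} (hb : 0 ≤ b) (ht : 0 ≤ t)
    (h : a ^ 3 ≤ t * b ^ 3) : a ≤ t ^ ((1 : ℝ) / 3) * b := by
  have hcube : (t ^ ((1 : ℝ) / 3) * b) ^ 3 = t * b ^ 3 := by
    rw [mul_pow, one_div, ← Nat.cast_ofNat, rpow_inv_natCast_pow ht three_ne_zero]
  exact le_of_pow_le_pow_left₀ three_ne_zero (by positivity) (hcube ▸ h)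

/-- Coercivity estimate: under the sharp Gagliardo-Nirenberg inequality with
`C_opt = (2/3)(H_φ M_φ)^{-1/2}` and `-N_φ M_φ = (2/3) H_φ M_φ`, the smallness
condition `-N(f)M(f) ≤ (1-η)(-N_φ M_φ)` yields `-N(f) ≤ (2/3)(1-η)^{1/3} H(f)`
and `G(f) = H(f) + (3/2)N(f) ≥ (1 - (1-η)^{1/3}) H(f)`. -/
theorem coercivity_estimate (Mf Hf Nf Hphi Mphi η : ℝ)
    (hMf : 0 ≤ Mf) (hHf : 0 ≤ Hf) (hHphi : 0 < Hphi) (hMphi : 0 < Mphi)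
    (hη : η ∈ Set.Ioo (0 : ℝ) 1)
    (hGN : -Nf ≤ (2 / 3) * (Hphi * Mphi) ^ (-(1 : ℝ) / 2) *
      Hf ^ ((3 : ℝ) / 2) * Mf ^ ((1 : ℝ) / 2))
    (hsmall : -Nf * Mf ≤ (1 - η) * ((2 / 3) * (Hphi * Mphi)))
    (hNf : Nf < 0) :
    -Nf ≤ (2 / 3) * (1 - η) ^ ((1 : ℝ) / 3) * Hf ∧
    Hf + (3 / 2) * Nf ≥ (1 - (1 - η) ^ ((1 : ℝ) / 3)) * Hf := by
  have hK : 0 < Hphi * Mphi := mul_pos hHphi hMphi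
  have ha : 0 ≤ -Nf := neg_nonneg.2 hNf.le
  have hsq := sq_le_of_le_mul_rpow hK hHf hMf ha hGN
  have hMf_pos : 0 < Mf := by
    rcases hMf.eq_or_lt with rfl | hpos
    · nlinarith
    · exact hpos
  have hcube : (-Nf) ^ 3 ≤ (1 - η) * (2 / 3 * Hf) ^ 3 := by
    refine le_of_mul_le_mul_right ?_ hMf_pos
    calc (-Nf) ^ 3 * Mf = (-Nf) ^ 2 * (-Nf * Mf) := by ring
      _ ≤ (2 / 3) ^ 2 * Hf ^ 3 * Mf / (Hphi * Mphi) * ((1 - η) * ((2 / 3) * (Hphi * Mphi))) :=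
          mul_le_mul hsq hsmall (mul_nonneg ha hMf) (by positivity)
      _ = (1 - η) * (2 / 3 * Hf) ^ 3 * Mf := by field_simp
  have hkey := le_rpow_one_third_mul_of_pow_three_le (by positivity) (by linarith [hη.2]) hcube
  constructor <;> linarith
end

section
/- Under the hypotheses of the coercivity lemma (i.e., -N(f) ≤ C_opt H(f)^{3/2} M(f)^{1/2}, -N(f)M(f) ≤ A < -N(φ)M(φ), with C_opt = (2/3)(H(φ)M(φ))^{-1/2} and -N(φ)M(φ) = (2/3)H(φ)M(φ)), there exists ν > 0 depending only on A and on H(φ)M(φ) such that G(f) ≥ ν H(f) and E(f) ≥ (ν/2) H(f), where G(f) = H(f) + (3/2)N(f) and E(f) = (1/2)(H(f)+N(f)). The key algebraic identity used is E(f) = (1/2)G(f) - (1/4)N(f) ≥ (1/2)G(f) whenever N(f) ≤ 0, and E(f) ≥ (1/2)H(f) trivially if N(f) ≥ 0. -/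
/-- Coercivity lemma: if `-N(f)M(f) ≤ A < -N_φ M_φ = (2/3) H_φ M_φ` and the
Gagliardo-Nirenberg inequality holds with `C_opt = (2/3)(H_φ M_φ)^{-1/2}`, then
there is `ν > 0`, depending only on `A` and `H_φ M_φ`, such that
`G(f) ≥ ν H(f)` and `E(f) ≥ (ν/2) H(f)`. -/
theorem coercivity_lemma (A Hphi Mphi : ℝ) (hA : 0 < A)
    (hHphi : 0 < Hphi) (hMphi : 0 < Mphi)
    (hAlt : A < (2 / 3) * (Hphi * Mphi)) :
    ∃ ν : ℝ, 0 < ν ∧ ∀ Mf Hf Nf : ℝ, 0 ≤ Mf → 0 ≤ Hf →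
      (-Nf ≤ (2 / 3) * (Hphi * Mphi) ^ (-(1 : ℝ) / 2) *
        Hf ^ ((3 : ℝ) / 2) * Mf ^ ((1 : ℝ) / 2)) →
      -Nf * Mf ≤ A →
      (Hf + (3 / 2) * Nf ≥ ν * Hf ∧ (1 / 2) * (Hf + Nf) ≥ (ν / 2) * Hf) := by
  set P := Hphi * Mphi with hPdef
  have hP : 0 < P := mul_pos hHphi hMphi
  set κ : ℝ := (4 * A / (9 * P)) ^ ((1 : ℝ) / 3) with hκdef
  have hx : (0:ℝ) < 4 * A / (9 * P) := by positivity
  have hκpos : 0 < κ := Real.rpow_pos_of_pos hx _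
  have hκlt : κ < 2 / 3 := by
    have h1 : 4 * A / (9 * P) < 8 / 27 := by
      rw [div_lt_div_iff₀ (by positivity) (by norm_num)]
      nlinarith
    have h2 : κ < ((8:ℝ) / 27) ^ ((1:ℝ)/3) :=
      Real.rpow_lt_rpow hx.le h1 (by norm_num)
    have h3 : ((8:ℝ) / 27) ^ ((1:ℝ)/3) = 2 / 3 := by
      have : ((8:ℝ) / 27) = (2/3) ^ (3:ℝ) := by
        rw [show (3:ℝ) = ((3:ℕ):ℝ) by norm_num, Real.rpow_natCast]; norm_num
      rw [this, ← Real.rpow_mul (by norm_num)]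
      norm_num
    linarith [h3 ▸ h2]
  have hκ3 : κ ^ (3:ℕ) = 4 * A / (9 * P) := by
    rw [hκdef, ← Real.rpow_natCast ((4 * A / (9 * P)) ^ ((1:ℝ)/3)) 3,
      ← Real.rpow_mul hx.le]
    norm_num
  refine ⟨1 - (3/2) * κ, by linarith, ?_⟩
  intro Mf Hf Nf hMf hHf hGN hNM
  rcases le_or_gt 0 Nf with hN | hN
  · constructor <;> nlinarith
  · -- key claim : -Nf ≤ κ * Hf
    have hMf0 : 0 < Mf := by
      rcases hMf.eq_or_lt with h | h
      · exfalso
        rw [← h, Real.zero_rpow (by norm_num)] at hGN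
        simp at hGN; linarith
      · exact h
    have hHf0 : 0 < Hf := by
      rcases hHf.eq_or_lt with h | h
      · exfalso
        rw [← h, Real.zero_rpow (by norm_num)] at hGN
        simp at hGN; linarith
      · exact h
    have hsq1 : (Hf ^ ((3:ℝ)/2)) ^ (2:ℕ) = Hf ^ (3:ℕ) := by
      rw [← Real.rpow_natCast (Hf ^ ((3:ℝ)/2)) 2, ← Real.rpow_mul hHf,
        show ((3:ℝ)/2) * ((2:ℕ):ℝ) = ((3:ℕ):ℝ) by norm_num, Real.rpow_natCast]
    have hsq2 : (Mf ^ ((1:ℝ)/2)) ^ (2:ℕ) = Mf := by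
      rw [← Real.rpow_natCast (Mf ^ ((1:ℝ)/2)) 2, ← Real.rpow_mul hMf]
      norm_num
    have hsq3 : (P ^ (-(1:ℝ)/2)) ^ (2:ℕ) = P⁻¹ := by
      rw [← Real.rpow_natCast (P ^ (-(1:ℝ)/2)) 2, ← Real.rpow_mul hP.le,
        show (-(1:ℝ)/2) * ((2:ℕ):ℝ) = -1 by norm_num, Real.rpow_neg_one]
    -- square the GN inequality
    have hGNsq : (-Nf) ^ (2:ℕ) ≤ (4 / 9) * P⁻¹ * Hf ^ (3:ℕ) * Mf := by
      have h0 : (0:ℝ) ≤ -Nf := by linarith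
      have := mul_self_le_mul_self h0 hGN
      calc (-Nf) ^ (2:ℕ) = (-Nf) * (-Nf) := sq (-Nf)
        _ ≤ (2 / 3 * P ^ (-(1:ℝ)/2) * Hf ^ ((3:ℝ)/2) * Mf ^ ((1:ℝ)/2)) *
            (2 / 3 * P ^ (-(1:ℝ)/2) * Hf ^ ((3:ℝ)/2) * Mf ^ ((1:ℝ)/2)) := this
        _ = (4 / 9) * (P ^ (-(1:ℝ)/2)) ^ (2:ℕ) * (Hf ^ ((3:ℝ)/2)) ^ (2:ℕ) *
            (Mf ^ ((1:ℝ)/2)) ^ (2:ℕ) := by ring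
        _ = (4 / 9) * P⁻¹ * Hf ^ (3:ℕ) * Mf := by rw [hsq1, hsq2, hsq3]
    -- cube bound
    have hcube : (-Nf) ^ (3:ℕ) ≤ (κ * Hf) ^ (3:ℕ) := by
      have hP' : (0:ℝ) < P⁻¹ := inv_pos.mpr hP
      have hkey : (-Nf) ^ (3:ℕ) ≤ (4 / 9) * P⁻¹ * Hf ^ (3:ℕ) * A := by
        nlinarith [pow_pos hHf0 3, mul_pos hP' (pow_pos hHf0 3), sq_nonneg Nf]
      have : (κ * Hf) ^ (3:ℕ) = (4 * A / (9 * P)) * Hf ^ (3:ℕ) := by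
        rw [mul_pow, hκ3]
      rw [this]
      have : (4 / 9) * P⁻¹ * Hf ^ (3:ℕ) * A = 4 * A / (9 * P) * Hf ^ (3:ℕ) := by
        field_simp
      linarith [this ▸ hkey]
    have hkh : -Nf ≤ κ * Hf := by
      by_contra h
      push_neg at h
      have := pow_lt_pow_left₀ h (by positivity : (0:ℝ) ≤ κ * Hf) (n := 3) (by norm_num)
      linarith
    have hκH : 0 < κ * Hf := mul_pos hκpos hHf0
    constructor <;> [linarith; linarith]
end
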